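/- arXiv:2302.03574 — 6 statements merged into one kernel-verified Lean document; each statement's English description precedes it below -/
import Mathlib

section
/- Fix λ > 0, α > 2, θ > 0, p_t > 0, σ² ≥ 0, γ ∈ (0,1) and an integer j ≥ 1. Define G(r) = 2πλ r^{2−α}/(α−2) and s(r) = (θ/p_t)(p_t G(r) + σ²) for r > 0, and let μ_j be the measure on the ordered simplex {0 < r₀ < r₁ < ⋯ < r_j} ⊂ ℝ^{j+1} with density (2πλ)^{j+1} r₀ r₁ ⋯ r_j exp(−πλ r_j²) with respect to Lebesgue measure. For positive r₁ < ⋯ < r_j, let K̃(r₁,…,r_j) be the unique positive real x with exp(−s(r_j) x) = γ (1 + θ (Σ_{k=1}^{j} r_k^{−α}) x). Then μ_j of the event {(r₀,…,r_j) : exp(−s(r_j) r₀^α) > γ (1 + θ r₀^α Σ_{k=1}^{j} r_k^{−α})} equals the integral over {0 < r₁ < ⋯ < r_j} of min(1, K̃(r₁,…,r_j)^{2/α} / r₁²) · 2^j (πλ)^{j+1} r₁³ r₂ ⋯ r_j exp(−πλ r_j²) with respect to dr₁ ⋯ dr_j. -/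
open MeasureTheory Real Set
open scoped ENNReal

/-!
Integrate out `r₀` first. For fixed `r₁ < ⋯ < r_j`, the left side `γ (1 + θ t Σₖ rₖ^(-α))` of
the success condition is increasing and the right side `exp (-s t)` decreasing in `t = r₀ ^ α`, so the event is
`r₀ < K̃ ^ (1/α)`, and the `r₀`-section of the event inside the ordered simplex is the interval
`(0, min r₁ K̃^(1/α))`. The density is linear in `r₀`, so the inner integral is the remaining
density times `(min r₁ K̃^(1/α))² / 2 = min 1 (K̃^(2/α) / r₁²) · r₁² / 2`.
-/

theorem measurableSet_setOf_strictMono {ι α : Type*} [Countable ι] [Preorder ι] [LinearOrder α]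
    [TopologicalSpace α] [OrderClosedTopology α] [SecondCountableTopology α] [MeasurableSpace α]
    [OpensMeasurableSpace α] : MeasurableSet {r : ι → α | StrictMono r} := by
  simp only [StrictMono, ofPred_forall]
  exact .iInter fun i => .iInter fun j => .iInter fun _ =>
    measurableSet_lt (measurable_pi_apply i) (measurable_pi_apply j)

theorem lintegral_pi_eq_lintegral_lintegral_cons {α : Type*} [MeasurableSpace α] (μ : Measure α)
    [SigmaFinite μ] {n : ℕ} {F : (Fin (n + 1) → α) → ℝ≥0∞} (hF : Measurable F) :
    ∫⁻ r, F r ∂Measure.pi (fun _ => μ) =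
      ∫⁻ q, ∫⁻ x, F (Fin.cons x q) ∂μ ∂Measure.pi (fun _ => μ) := by
  set e := MeasurableEquiv.piFinSuccAbove (fun _ : Fin (n + 1) => α) 0
  have he : MeasurePreserving e.symm _ _ :=
    (measurePreserving_piFinSuccAbove (fun _ : Fin (n + 1) => μ) 0).symm
  rw [← he.lintegral_comp hF, lintegral_prod_symm (fun p => F (e.symm p))
    (hF.comp e.symm.measurable).aemeasurable]
  simp only [e, MeasurableEquiv.piFinSuccAbove_symm_apply, Fin.insertNthEquiv_zero]
  rfl

theorem setLIntegral_Ioo_zero_ofReal_mul (C : ℝ) {M : ℝ} (hM : 0 ≤ M) :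
    ∫⁻ x in Ioo 0 M, ENNReal.ofReal (C * x) = ENNReal.ofReal (C * M ^ 2 / 2) := by
  rcases le_total 0 C with hC | hC
  · rw [← ofReal_integral_eq_lintegral_ofReal]
    · rw [← integral_Ioc_eq_integral_Ioo, ← intervalIntegral.integral_of_le hM,
        intervalIntegral.integral_const_mul, integral_id]
      ring_nf
    · exact (continuous_const.mul continuous_id).integrableOn_Icc.mono_set Ioo_subset_Icc_self
    · filter_upwards [ae_restrict_mem measurableSet_Ioo] with x hx
      exact mul_nonneg hC hx.1.le
  · have hCx : ∀ x ∈ Ioo 0 M, ENNReal.ofReal (C * x) = 0 := fun x hx =>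
      ENNReal.ofReal_of_nonpos (mul_nonpos_of_nonpos_of_nonneg hC hx.1.le)
    rw [ENNReal.ofReal_of_nonpos (by nlinarith [sq_nonneg M]),
      setLIntegral_congr_fun measurableSet_Ioo hCx, lintegral_zero]

theorem lt_exp_neg_mul_iff_lt {a b γ K t : ℝ} (ha : 0 ≤ a) (hγb : 0 < γ * b)
    (hK : exp (-(a * K)) = γ * (1 + b * K)) :
    γ * (1 + b * t) < exp (-(a * t)) ↔ t < K := by
  have hanti : StrictAnti fun u => exp (-(a * u)) - γ * (1 + b * u) := fun u v huv => by
    have : exp (-(a * v)) ≤ exp (-(a * u)) := exp_le_exp.mpr (by nlinarith)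
    dsimp only
    nlinarith
  simpa only [sub_eq_zero_of_eq hK, sub_pos] using hanti.lt_iff_gt (a := K) (b := t)

def orderedSimplex (n : ℕ) : Set (Fin (n + 1) → ℝ) := {r | 0 < r 0 ∧ StrictMono r}

theorem measurableSet_orderedSimplex (n : ℕ) : MeasurableSet (orderedSimplex n) :=
  (measurableSet_lt measurable_const (measurable_pi_apply 0)).inter measurableSet_setOf_strictMono

theorem cons_mem_orderedSimplex_iff {n : ℕ} {x : ℝ} {q : Fin (n + 1) → ℝ} :
    Fin.cons x q ∈ orderedSimplex (n + 1) ↔ 0 < x ∧ x < q 0 ∧ StrictMono q := by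
  simp only [orderedSimplex, mem_ofPred_eq, Fin.cons_zero, Fin.strictMono_cons]
  exact and_congr_right fun _ =>
    ⟨fun h => ⟨h.1 0, h.2⟩, fun h => ⟨fun i => h.1.trans_le (h.2.monotone (Fin.zero_le i)), h.2⟩⟩

theorem mem_orderedSimplex_of_cons_mem {n : ℕ} {x : ℝ} {q : Fin (n + 1) → ℝ}
    (h : Fin.cons x q ∈ orderedSimplex (n + 1)) : q ∈ orderedSimplex n :=
  have ⟨hx, hxq, hq⟩ := cons_mem_orderedSimplex_iff.mp h
  ⟨hx.trans hxq, hq⟩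

theorem pos_of_mem_orderedSimplex {n : ℕ} {q : Fin (n + 1) → ℝ} (hq : q ∈ orderedSimplex n)
    (k : Fin (n + 1)) : 0 < q k :=
  hq.1.trans_le (hq.2.monotone (Fin.zero_le k))

theorem withDensity_orderedSimplex_apply (n : ℕ) (c : ℝ) {g : ℝ → ℝ} (hg : Measurable g)
    {T : (Fin (n + 1) → ℝ) → ℝ} (hT : ∀ q ∈ orderedSimplex n, 0 ≤ T q)
    {E : Set (Fin (n + 1 + 1) → ℝ)} (hE : MeasurableSet E)
    (hET : E ∩ orderedSimplex (n + 1) = {r | r 0 < T (Fin.tail r)} ∩ orderedSimplex (n + 1)) :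
    (volume.restrict (orderedSimplex (n + 1))).withDensity
        (fun r => ENNReal.ofReal (c * (∏ i, r i) * g (r (Fin.last (n + 1))))) E =
      ∫⁻ q in orderedSimplex n,
        ENNReal.ofReal (c * (∏ i, q i) * g (q (Fin.last n)) * min (q 0) (T q) ^ 2 / 2) := by
  set S := {r : Fin (n + 1 + 1) → ℝ | r 0 < T (Fin.tail r)}
  set f := fun r : Fin (n + 1 + 1) → ℝ => ENNReal.ofReal (c * (∏ i, r i) * g (r (Fin.last (n + 1))))
  have hf : Measurable f := by fun_prop
  have hS : MeasurableSet (S ∩ orderedSimplex (n + 1)) :=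
    hET ▸ hE.inter (measurableSet_orderedSimplex _)
  rw [withDensity_apply', Measure.restrict_restrict' (measurableSet_orderedSimplex _), hET,
    ← lintegral_indicator hS, volume_pi,
    lintegral_pi_eq_lintegral_lintegral_cons _ (hf.indicator hS), ← volume_pi,
    ← lintegral_indicator (measurableSet_orderedSimplex n)]
  refine lintegral_congr fun q => ?_
  by_cases hq : q ∈ orderedSimplex n
  · rw [indicator_of_mem hq, ← setLIntegral_Ioo_zero_ofReal_mul _ (le_min hq.1.le (hT q hq)),
      ← lintegral_indicator measurableSet_Ioo]
    refine lintegral_congr fun x => ?_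
    have hmem : Fin.cons x q ∈ S ∩ orderedSimplex (n + 1) ↔ x ∈ Ioo 0 (min (q 0) (T q)) := by
      simp only [S, mem_inter_iff, mem_ofPred_eq, cons_mem_orderedSimplex_iff, Fin.cons_zero,
        Fin.tail_cons, mem_Ioo, lt_min_iff, hq.2]
      tauto
    by_cases hx : x ∈ Ioo 0 (min (q 0) (T q))
    · rw [indicator_of_mem (hmem.2 hx), indicator_of_mem hx]
      simp only [f, Fin.prod_cons, Fin.cons_last]
      congr 1
      ring
    · rw [indicator_of_notMem (mt hmem.1 hx), indicator_of_notMem hx]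
  · have hzero : ∀ x, (S ∩ orderedSimplex (n + 1)).indicator f (Fin.cons x q) = 0 :=
      fun x => indicator_of_notMem (fun h => hq (mem_orderedSimplex_of_cons_mem h.2)) _
    simp only [indicator_of_notMem hq, hzero, lintegral_zero]

theorem setOf_lt_exp_inter_orderedSimplex {n : ℕ} {α θ γ : ℝ} (hα : 0 < α) (hθ : 0 < θ)
    (hγ : 0 < γ) {s : ℝ → ℝ} (hs : ∀ t, 0 < t → 0 ≤ s t) {Kt : (Fin (n + 1) → ℝ) → ℝ}
    (hKt : ∀ q : Fin (n + 1) → ℝ, (∀ k, 0 < q k) → StrictMono q →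
      0 < Kt q ∧ exp (-(s (q (Fin.last n)) * Kt q)) = γ * (1 + θ * (∑ k, q k ^ (-α)) * Kt q)) :
    {r : Fin (n + 1 + 1) → ℝ | γ * (1 + θ * r 0 ^ α * ∑ k : Fin (n + 1), r k.succ ^ (-α))
        < exp (-(s (r (Fin.last (n + 1))) * r 0 ^ α))} ∩ orderedSimplex (n + 1) =
      {r | r 0 < Kt (Fin.tail r) ^ α⁻¹} ∩ orderedSimplex (n + 1) := by
  refine Set.ext fun r => and_congr_left fun hr => ?_
  have hq : Fin.tail r ∈ orderedSimplex n :=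
    mem_orderedSimplex_of_cons_mem (by rwa [Fin.cons_self_tail])
  have hpos := pos_of_mem_orderedSimplex hq
  obtain ⟨hK, hKeq⟩ := hKt _ hpos hq.2
  have hsum : 0 < ∑ k, Fin.tail r k ^ (-α) :=
    Finset.sum_pos (fun k _ => rpow_pos_of_pos (hpos k) _) Finset.univ_nonempty
  have := lt_exp_neg_mul_iff_lt (t := r 0 ^ α) (hs _ (hpos _)) (by positivity) hKeq
  rw [mem_ofPred_eq, mem_ofPred_eq, lt_rpow_inv_iff_of_pos hr.1.le hK.le hα, ← this, mul_right_comm]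
  rfl

theorem min_sq_eq_min_one_div_mul_sq {a b : ℝ} (ha : 0 < a) (hb : 0 ≤ b) :
    min a b ^ 2 = min 1 (b ^ 2 / a ^ 2) * a ^ 2 := by
  have ha2 : 0 < a ^ 2 := by positivity
  rcases le_total a b with h | h
  · rw [min_eq_left h, min_eq_left ((one_le_div ha2).mpr (pow_le_pow_left₀ ha.le h 2)), one_mul]
  · rw [min_eq_right h, min_eq_right ((div_le_one ha2).mpr (pow_le_pow_left₀ hb h 2)),
      div_mul_cancel₀ _ ha2.ne']

/-- Theorem 3 of the paper (j-th nearest interferer approximation of the SINR meta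
distribution), as an exact measure identity.  `μ_j` is the joint law of the ordered
distances `R₀ < R₁ < ⋯ < R_j` (density `(2πλ)^{j+1} r₀⋯r_j e^{−πλ r_j²}` on the ordered
simplex), `G` is the conditional mean residual interference, `s r = (θ/p_t)(p_t G r + σ²)`,
and `Kt (r₁,…,r_j)` is the unique positive solution `x` of
`exp(−s(r_j)x) = γ(1 + θ (Σ_k r_k^{−α}) x)`.  Then the `μ_j`-measure of the success event
equals the integral of `F_{R₀|R₁}(Kt^{1/α} | r₁) = min(1, Kt^{2/α}/r₁²)` against the joint
density `2^j (πλ)^{j+1} r₁³ r₂⋯r_j e^{−πλ r_j²}` of `(R₁,…,R_j)`. -/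
theorem stmt6 (j : ℕ) (hj : 1 ≤ j) (lam α θ pt σ2 γ : ℝ)
    (hlam : 0 < lam) (hα : 2 < α) (hθ : 0 < θ) (hpt : 0 < pt) (hσ : 0 ≤ σ2)
    (hγ0 : 0 < γ)
    (G s : ℝ → ℝ)
    (hG : ∀ r, G r = 2 * π * lam * r ^ (2 - α) / (α - 2))
    (hs : ∀ r, s r = θ / pt * (pt * G r + σ2))
    (Kt : (Fin j → ℝ) → ℝ)
    (hKt : ∀ q : Fin j → ℝ, (∀ k, 0 < q k) → StrictMono q →
      0 < Kt q ∧
        Real.exp (-(s (q ⟨j - 1, by omega⟩) * Kt q))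
          = γ * (1 + θ * (∑ k : Fin j, q k ^ (-α)) * Kt q)) :
    (Measure.withDensity
        ((volume : Measure (Fin (j + 1) → ℝ)).restrict
          {r : Fin (j + 1) → ℝ | 0 < r 0 ∧ StrictMono r})
        fun r => ENNReal.ofReal
          ((2 * π * lam) ^ (j + 1) * (∏ i, r i) * Real.exp (-(π * lam * (r (Fin.last j)) ^ 2))))
      {r : Fin (j + 1) → ℝ |
        γ * (1 + θ * r 0 ^ α * ∑ k : Fin j, (r k.succ) ^ (-α))
          < Real.exp (-(s (r (Fin.last j)) * r 0 ^ α))}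
      = ∫⁻ q in {q : Fin j → ℝ | 0 < q ⟨0, by omega⟩ ∧ StrictMono q},
          ENNReal.ofReal
            (min 1 (Kt q ^ (2 / α) / (q ⟨0, by omega⟩) ^ 2) *
              (2 ^ j * (π * lam) ^ (j + 1) * (q ⟨0, by omega⟩) ^ 2 * (∏ k, q k) *
                Real.exp (-(π * lam * (q ⟨j - 1, by omega⟩) ^ 2)))) := by
  obtain ⟨n, rfl⟩ : ∃ n, j = n + 1 := ⟨j - 1, by omega⟩
  have hs_eq : s = fun r => θ / pt * (pt * (2 * π * lam * r ^ (2 - α) / (α - 2)) + σ2) :=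
    funext fun r => by rw [hs, hG]
  have hs_nonneg : ∀ t, 0 < t → 0 ≤ s t := fun t ht => by
    have : 0 < α - 2 := sub_pos.mpr hα
    rw [hs_eq]
    positivity
  have hE : MeasurableSet {r : Fin (n + 1 + 1) → ℝ |
      γ * (1 + θ * r 0 ^ α * ∑ k : Fin (n + 1), r k.succ ^ (-α))
        < exp (-(s (r (Fin.last (n + 1))) * r 0 ^ α))} := by
    rw [hs_eq]
    exact measurableSet_lt (by fun_prop) (by fun_prop)
  have hT : ∀ q ∈ orderedSimplex n, 0 ≤ Kt q ^ α⁻¹ := fun q hq =>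
    rpow_nonneg (hKt q (pos_of_mem_orderedSimplex hq) hq.2).1.le _
  have key := withDensity_orderedSimplex_apply n ((2 * π * lam) ^ (n + 1 + 1))
    (g := fun t => exp (-(π * lam * t ^ 2))) (by fun_prop) hT hE
    (setOf_lt_exp_inter_orderedSimplex (by linarith) hθ hγ0 hs_nonneg hKt)
  refine key.trans (setLIntegral_congr_fun (measurableSet_orderedSimplex n) fun q hq => ?_)
  have hK := (hKt q (pos_of_mem_orderedSimplex hq) hq.2).1
  have hpow : (Kt q ^ α⁻¹) ^ 2 = Kt q ^ (2 / α) := by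
    rw [← Real.rpow_natCast, ← rpow_mul hK.le, Nat.cast_ofNat, inv_mul_eq_div]
  have h0 : (⟨0, by omega⟩ : Fin (n + 1)) = 0 := rfl
  have hlast : (⟨n + 1 - 1, by omega⟩ : Fin (n + 1)) = Fin.last n := rfl
  rw [min_sq_eq_min_one_div_mul_sq hq.1 (hT q hq), hpow, h0, hlast]
  congr 1
  ring
end

section
/- Fix λ > 0, α > 2, θ > 0, p_t > 0, σ² ≥ 0 and γ ∈ (0,1). Define G(r) = 2πλ r^{2−α}/(α−2) and s(r) = (θ/p_t)(p_t G(r) + σ²) for r > 0, and let μ₁ be the measure on {(r₀,r₁) ∈ ℝ² : 0 < r₀ < r₁} with density (2πλ)² r₀ r₁ exp(−πλ r₁²) with respect to Lebesgue measure. For r > 0, let K₁(r) = x(r)^{1/α}, where x(r) is the unique positive real with exp(−s(r) x) = γ (1 + θ r^{−α} x). Then μ₁ of the event {(r₀,r₁) : exp(−s(r₁) r₀^α) > γ (1 + θ r₀^α r₁^{−α})} equals ∫₀^∞ min(1, K₁(r)²/r²) · 2(πλ)² r³ exp(−πλ r²) dr. -/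
/-!
Integrate out `r₀` first. For fixed `r₁ = r > 0`, write the success condition in `u = r₀^α` as
`γ(1 + θ r^{-α} u) < exp(-s(r) u)`: the difference of the two sides is strictly monotone in `u`
and vanishes at `u = x(r)`, so the `r₀`-section of the event is `(0, min(r, K₁(r)))`. Integrating
the density `(2πλ)² r₀ r e^{-πλr²}` over it gives `2(πλ)² r e^{-πλr²} min(r, K₁(r))²`, which is
the integrand on the right.
-/

open MeasureTheory Real Set ENNReal

theorem withDensity_restrict_prod_apply {α β : Type*} [MeasurableSpace α] [MeasurableSpace β]
    {μ : Measure α} {ν : Measure β} [SFinite μ] [SFinite ν] {f : α × β → ℝ≥0∞}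
    (hf : Measurable f) {S A : Set (α × β)} (hS : MeasurableSet S) (hA : MeasurableSet A) :
    ((μ.prod ν).restrict S).withDensity f A
      = ∫⁻ y, ∫⁻ x in {x | (x, y) ∈ A ∩ S}, f (x, y) ∂μ ∂ν := by
  rw [withDensity_apply _ hA, Measure.restrict_restrict hA, ← lintegral_indicator (hA.inter hS),
    lintegral_prod_symm _ (hf.indicator (hA.inter hS)).aemeasurable]
  congr 1 with y
  exact lintegral_indicator (measurable_prodMk_right (hA.inter hS)) _

theorem lintegral_Ioo_ofReal_const_mul {C m : ℝ} (hC : 0 ≤ C) (hm : 0 ≤ m) :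
    ∫⁻ t in Ioo 0 m, ENNReal.ofReal (C * t) = ENNReal.ofReal (C * (m ^ 2 / 2)) := by
  have hint : IntegrableOn (fun t : ℝ => C * t) (Ioo 0 m) :=
    (continuous_const.mul continuous_id).integrableOn_Icc.mono_set Ioo_subset_Icc_self
  have hnonneg : 0 ≤ᵐ[volume.restrict (Ioo 0 m)] fun t : ℝ => C * t := by
    filter_upwards [ae_restrict_mem measurableSet_Ioo] with t ht
    exact mul_nonneg hC ht.1.le
  rw [← ofReal_integral_eq_lintegral_ofReal hint hnonneg, ← integral_Ioc_eq_integral_Ioo,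
    ← intervalIntegral.integral_of_le hm, intervalIntegral.integral_const_mul, integral_id]
  congr 1
  ring

theorem mul_one_add_lt_exp_neg_mul_iff {c₁ c₂ g u t : ℝ} (hc₁ : 0 ≤ c₁) (hc₂ : 0 < c₂)
    (hg : 0 < g) (hu : Real.exp (-(c₁ * u)) = g * (1 + c₂ * u)) :
    g * (1 + c₂ * t) < Real.exp (-(c₁ * t)) ↔ t < u := by
  have hanti : StrictAnti fun v => Real.exp (-(c₁ * v)) - g * (1 + c₂ * v) := by
    intro a b hab
    have hexp : Real.exp (-(c₁ * b)) ≤ Real.exp (-(c₁ * a)) :=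
      Real.exp_le_exp.2 (by nlinarith)
    have hlin : g * (1 + c₂ * a) < g * (1 + c₂ * b) := by
      nlinarith [mul_pos hg (mul_pos hc₂ (sub_pos.2 hab))]
    linarith
  have h := hanti.lt_iff_gt (a := u) (b := t)
  rwa [hu, sub_self, sub_pos] at h

theorem mul_one_add_rpow_lt_exp_neg_mul_iff {a c₁ c₂ g u t : ℝ} (ha : 0 < a) (hc₁ : 0 ≤ c₁)
    (hc₂ : 0 < c₂) (hg : 0 < g) (hu₀ : 0 < u) (hu : Real.exp (-(c₁ * u)) = g * (1 + c₂ * u))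
    (ht : 0 ≤ t) :
    g * (1 + c₂ * t ^ a) < Real.exp (-(c₁ * t ^ a)) ↔ t < u ^ (1 / a) := by
  rw [mul_one_add_lt_exp_neg_mul_iff hc₁ hc₂ hg hu, ← Real.rpow_lt_rpow_iff ht
    (Real.rpow_nonneg hu₀.le _) ha, ← Real.rpow_mul hu₀.le, one_div_mul_cancel ha.ne',
    Real.rpow_one]

theorem min_one_sq_div_sq_mul_sq {r K : ℝ} (hr : 0 < r) (hK : 0 ≤ K) :
    min 1 (K ^ 2 / r ^ 2) * r ^ 2 = min r K ^ 2 := by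
  have hr2 : 0 < r ^ 2 := by positivity
  rcases le_total r K with h | h
  · rw [min_eq_left h, min_eq_left ((one_le_div hr2).2 (pow_le_pow_left₀ hr.le h 2)), one_mul]
  · rw [min_eq_right h, min_eq_right ((div_le_one hr2).2 (pow_le_pow_left₀ hK h 2)),
      div_mul_cancel₀ _ hr2.ne']

theorem lintegral_success_slice {lam a θ γ c u r : ℝ} (ha : 0 < a) (hθ : 0 < θ) (hγ : 0 < γ)
    (hc : 0 ≤ c) (hu : 0 < u) (hu_eq : Real.exp (-(c * u)) = γ * (1 + θ * r ^ (-a) * u))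
    (hr : 0 < r) :
    ∫⁻ r₀ in {r₀ : ℝ | γ * (1 + θ * r₀ ^ a * r ^ (-a)) < Real.exp (-(c * r₀ ^ a)) ∧
        0 < r₀ ∧ r₀ < r},
        ENNReal.ofReal ((2 * π * lam) ^ 2 * r₀ * r * Real.exp (-(π * lam * r ^ 2)))
      = ENNReal.ofReal (min 1 ((u ^ (1 / a)) ^ 2 / r ^ 2) *
          (2 * (π * lam) ^ 2 * r ^ 3 * Real.exp (-(π * lam * r ^ 2)))) := by
  set K := u ^ (1 / a)
  have hsucc_iff : ∀ r₀ : ℝ, 0 ≤ r₀ →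
      (γ * (1 + θ * r₀ ^ a * r ^ (-a)) < Real.exp (-(c * r₀ ^ a)) ↔ r₀ < K) := fun r₀ hr₀ => by
    rw [mul_right_comm θ]
    exact mul_one_add_rpow_lt_exp_neg_mul_iff ha hc (by positivity) hγ hu hu_eq hr₀
  have hslice : {r₀ : ℝ | γ * (1 + θ * r₀ ^ a * r ^ (-a)) < Real.exp (-(c * r₀ ^ a)) ∧
      0 < r₀ ∧ r₀ < r} = Ioo 0 (min r K) := by
    ext r₀
    simp only [mem_ofPred_eq, mem_Ioo, lt_min_iff]
    constructor
    · rintro ⟨hsucc, hr₀, hr₀r⟩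
      exact ⟨hr₀, hr₀r, (hsucc_iff r₀ hr₀.le).1 hsucc⟩
    · rintro ⟨hr₀, hr₀r, hr₀K⟩
      exact ⟨(hsucc_iff r₀ hr₀.le).2 hr₀K, hr₀, hr₀r⟩
  set C := (2 * π * lam) ^ 2 * r * Real.exp (-(π * lam * r ^ 2))
  have hdensity : ∀ r₀ : ℝ,
      (2 * π * lam) ^ 2 * r₀ * r * Real.exp (-(π * lam * r ^ 2)) = C * r₀ := fun r₀ => by ring
  simp only [hslice, hdensity]
  rw [lintegral_Ioo_ofReal_const_mul (by positivity) (by positivity),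
    ← min_one_sq_div_sq_mul_sq hr (by positivity)]
  congr 1
  ring

theorem stmt7_general (lam α θ pt σ2 γ : ℝ)
    (hlam : 0 < lam) (hα : 2 < α) (hθ : 0 < θ) (hpt : 0 < pt) (hσ : 0 ≤ σ2)
    (hγ0 : 0 < γ)
    (G s : ℝ → ℝ)
    (hG : ∀ r, G r = 2 * π * lam * r ^ (2 - α) / (α - 2))
    (hs : ∀ r, s r = θ / pt * (pt * G r + σ2))
    (x : ℝ → ℝ)
    (hx : ∀ r, 0 < r → 0 < x r ∧
      Real.exp (-(s r * x r)) = γ * (1 + θ * r ^ (-α) * x r)) :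
    (Measure.withDensity
        ((volume : Measure (ℝ × ℝ)).restrict {p : ℝ × ℝ | 0 < p.1 ∧ p.1 < p.2})
        fun p => ENNReal.ofReal
          ((2 * π * lam) ^ 2 * p.1 * p.2 * Real.exp (-(π * lam * p.2 ^ 2))))
      {p : ℝ × ℝ |
        γ * (1 + θ * p.1 ^ α * p.2 ^ (-α)) < Real.exp (-(s p.2 * p.1 ^ α))}
      = ∫⁻ r in Set.Ioi (0 : ℝ),
          ENNReal.ofReal
            (min 1 ((x r ^ (1 / α)) ^ 2 / r ^ 2) *
              (2 * (π * lam) ^ 2 * r ^ 3 * Real.exp (-(π * lam * r ^ 2)))) := by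
  have hs_nonneg : ∀ r, 0 < r → 0 ≤ s r := fun r hr => by
    rw [hs, hG]
    have hα2 : 0 < α - 2 := sub_pos.2 hα
    exact mul_nonneg (div_nonneg hθ.le hpt.le)
      (add_nonneg (mul_nonneg hpt.le (div_nonneg (by positivity) hα2.le)) hσ)
  have hs_meas : Measurable s := by
    rw [show s = _ from funext hs, show G = _ from funext hG]
    fun_prop
  rw [Measure.volume_eq_prod, withDensity_restrict_prod_apply (by fun_prop)
    (show MeasurableSet {p : ℝ × ℝ | 0 < p.1 ∧ p.1 < p.2} from
      (measurableSet_lt measurable_const measurable_fst).inter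
        (measurableSet_lt measurable_fst measurable_snd))
    (measurableSet_lt (by fun_prop) (by fun_prop)), ← lintegral_indicator measurableSet_Ioi]
  refine lintegral_congr fun r => ?_
  rcases le_or_gt r 0 with hr | hr
  · rw [indicator_of_notMem (notMem_Ioi.2 hr)]
    exact setLIntegral_measure_zero _ _
      (measure_mono_null (fun r₀ h => absurd (h.2.1.trans h.2.2) hr.not_gt) measure_empty)
  rw [indicator_of_mem (mem_Ioi.2 hr)]
  exact lintegral_success_slice (by linarith) hθ hγ0 (hs_nonneg r hr) (hx r hr).1 (hx r hr).2 hr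

/-- Corollary 1 of the paper (dominant interferer-based approximation of the SINR meta
distribution) as an exact measure identity.  `μ₁` is the joint law of `(R₀, R₁)` (density
`(2πλ)² r₀ r₁ e^{−πλ r₁²}` on `{0 < r₀ < r₁}`), `s r = (θ/p_t)(p_t G r + σ²)` with
`G r = 2πλ r^{2−α}/(α−2)`, and for `r > 0`, `x r` is the unique positive solution of
`exp(−s(r)x) = γ(1 + θ r^{−α} x)`, so that `K₁ r = (x r)^{1/α}`.  The `μ₁`-measure of the
success event equals `∫₀^∞ min(1, K₁(r)²/r²) · 2(πλ)² r³ e^{−πλ r²} dr`. -/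
theorem stmt7 (lam α θ pt σ2 γ : ℝ)
    (hlam : 0 < lam) (hα : 2 < α) (hθ : 0 < θ) (hpt : 0 < pt) (hσ : 0 ≤ σ2)
    (hγ0 : 0 < γ) (hγ1 : γ < 1)
    (G s : ℝ → ℝ)
    (hG : ∀ r, G r = 2 * π * lam * r ^ (2 - α) / (α - 2))
    (hs : ∀ r, s r = θ / pt * (pt * G r + σ2))
    (x : ℝ → ℝ)
    (hx : ∀ r, 0 < r → 0 < x r ∧
      Real.exp (-(s r * x r)) = γ * (1 + θ * r ^ (-α) * x r)) :
    (Measure.withDensity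
        ((volume : Measure (ℝ × ℝ)).restrict {p : ℝ × ℝ | 0 < p.1 ∧ p.1 < p.2})
        fun p => ENNReal.ofReal
          ((2 * π * lam) ^ 2 * p.1 * p.2 * Real.exp (-(π * lam * p.2 ^ 2))))
      {p : ℝ × ℝ |
        γ * (1 + θ * p.1 ^ α * p.2 ^ (-α)) < Real.exp (-(s p.2 * p.1 ^ α))}
      = ∫⁻ r in Set.Ioi (0 : ℝ),
          ENNReal.ofReal
            (min 1 ((x r ^ (1 / α)) ^ 2 / r ^ 2) *
              (2 * (π * lam) ^ 2 * r ^ 3 * Real.exp (-(π * lam * r ^ 2)))) :=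
  stmt7_general lam α θ pt σ2 γ hlam hα hθ hpt hσ hγ0 G s hG hs x hx
end

section
/- Fix λ > 0, α > 0, θ > 0 and γ ∈ (0,1), and let μ₁ be the measure on {(r₀,r₁) ∈ ℝ² : 0 < r₀ < r₁} with density (2πλ)² r₀ r₁ exp(−πλ r₁²) with respect to Lebesgue measure. Then μ₁ of the event {(r₀,r₁) : (1 + θ r₀^α r₁^{−α})^{−1} > γ} equals min(1, ((1−γ)/(γθ))^{2/α}). -/
/-!
On `{0 < r₀ < r₁}` the event `(1 + θ (r₀/r₁)^α)⁻¹ > γ` says `r₀ / r₁ < ((1-γ)/(γθ))^{1/α}`, so it is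
the cone `{0 < r₀ < κ r₁}` with `κ = min(1, ((1-γ)/(γθ))^{1/α})`. Integrating out `r₀` first, the
density `(2πλ)² r₀ r₁ e^{-πλ r₁²}` gives `(2πλ)² κ²/2 · ∫₀^∞ r₁³ e^{-πλ r₁²} dr₁ = κ²`.
-/

open MeasureTheory Real Set

lemma lt_inv_one_add_mul_iff {γ θ s : ℝ} (hγ : 0 < γ) (hθ : 0 < θ) (hs : 0 ≤ s) :
    γ < (1 + θ * s)⁻¹ ↔ s < (1 - γ) / (γ * θ) := by
  rw [← one_div, lt_div_iff₀ (by positivity), lt_div_iff₀ (by positivity)]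
  constructor <;> intro h <;> linarith

lemma rpow_mul_rpow_neg_lt_iff {x y α c : ℝ} (hx : 0 ≤ x) (hy : 0 < y) (hα : 0 < α)
    (hc : 0 ≤ c) : x ^ α * y ^ (-α) < c ↔ x < c ^ α⁻¹ * y := by
  rw [rpow_neg hy.le, ← div_eq_mul_inv, ← div_rpow hx hy.le, ← div_lt_iff₀ hy,
    lt_rpow_inv_iff_of_pos (div_nonneg hx hy.le) hc hα]

lemma lt_inv_one_add_mul_rpow_iff {γ θ α x y : ℝ} (hγ0 : 0 < γ) (hγ1 : γ ≤ 1) (hθ : 0 < θ)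
    (hα : 0 < α) (hx : 0 ≤ x) (hy : 0 < y) :
    γ < (1 + θ * x ^ α * y ^ (-α))⁻¹ ↔ x < ((1 - γ) / (γ * θ)) ^ α⁻¹ * y := by
  rw [mul_assoc, lt_inv_one_add_mul_iff hγ0 hθ (by positivity),
    rpow_mul_rpow_neg_lt_iff hx hy hα (div_nonneg (by linarith) (by positivity))]

lemma setOf_lt_inv_one_add_mul_rpow_inter_eq {γ θ α : ℝ} (hγ0 : 0 < γ) (hγ1 : γ < 1)
    (hθ : 0 < θ) (hα : 0 < α) :
    {p : ℝ × ℝ | γ < (1 + θ * p.1 ^ α * p.2 ^ (-α))⁻¹} ∩ {p | 0 < p.1 ∧ p.1 < p.2}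
      = {p | 0 < p.1 ∧ p.1 < min 1 (((1 - γ) / (γ * θ)) ^ α⁻¹) * p.2} := by
  have hd : 0 < ((1 - γ) / (γ * θ)) ^ α⁻¹ := rpow_pos_of_pos (div_pos (by linarith) (by positivity)) _
  ext ⟨x, y⟩
  simp only [mem_inter_iff, mem_ofPred_eq]
  constructor
  · rintro ⟨hevent, hx, hxy⟩
    have hy := hx.trans hxy
    rw [lt_inv_one_add_mul_rpow_iff hγ0 hγ1.le hθ hα hx.le hy] at hevent
    rw [min_mul_of_nonneg _ _ hy.le, one_mul, lt_min_iff]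
    exact ⟨hx, hxy, hevent⟩
  · rintro ⟨hx, hcone⟩
    have hy : 0 < y := pos_of_mul_pos_right (hx.trans hcone) (lt_min one_pos hd).le
    rw [min_mul_of_nonneg _ _ hy.le, one_mul, lt_min_iff] at hcone
    exact ⟨(lt_inv_one_add_mul_rpow_iff hγ0 hγ1.le hθ hα hx.le hy).2 hcone.2, hx, hcone.1⟩

lemma lintegral_Ioo_zero_ofReal {a : ℝ} (ha : 0 ≤ a) :
    ∫⁻ x in Ioo 0 a, ENNReal.ofReal x = ENNReal.ofReal (a ^ 2 / 2) := by
  rw [← ofReal_integral_eq_lintegral_ofReal, ← integral_Ioc_eq_integral_Ioo,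
    ← intervalIntegral.integral_of_le ha, integral_id]
  · ring_nf
  · exact continuous_id.integrableOn_Icc.mono_set Ioo_subset_Icc_self
  · filter_upwards [ae_restrict_mem measurableSet_Ioo] with x hx using hx.1.le

lemma lintegral_Ioi_pow_three_mul_exp_neg_mul_sq {b : ℝ} (hb : 0 < b) :
    ∫⁻ x in Ioi 0, ENNReal.ofReal (x ^ 3 * exp (-(b * x ^ 2)))
      = ENNReal.ofReal (1 / (2 * b ^ 2)) := by
  have hint := integral_rpow_mul_exp_neg_mul_rpow two_pos (by norm_num : (-1 : ℝ) < 3) hb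
  have hintegrable := integrableOn_rpow_mul_exp_neg_mul_sq hb (s := 3) (by norm_num)
  norm_num at hint hintegrable
  rw [← ofReal_integral_eq_lintegral_ofReal hintegrable, hint]
  · ring_nf
  · filter_upwards [ae_restrict_mem measurableSet_Ioi] with x (hx : 0 < x)
    positivity

lemma lintegral_indicator_cone_slice {κ : ℝ} (hκ : 0 ≤ κ) (g : ℝ → ℝ) (y : ℝ) :
    ∫⁻ x, {p : ℝ × ℝ | 0 < p.1 ∧ p.1 < κ * p.2}.indicator
        (fun p => ENNReal.ofReal (p.1 * g p.2)) (x, y)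
      = (Ioi 0).indicator (fun y => ENNReal.ofReal ((κ * y) ^ 2 / 2 * g y)) y := by
  rcases le_or_gt y 0 with hy | hy
  · have hempty : ∀ x, (x, y) ∉ {p : ℝ × ℝ | 0 < p.1 ∧ p.1 < κ * p.2} := fun x hx =>
      (hx.1.trans hx.2).not_ge (mul_nonpos_of_nonneg_of_nonpos hκ hy)
    simp [indicator_of_notMem (hempty _), hy]
  · have hslice : (fun x => {p : ℝ × ℝ | 0 < p.1 ∧ p.1 < κ * p.2}.indicator
        (fun p => ENNReal.ofReal (p.1 * g p.2)) (x, y))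
        = (Ioo 0 (κ * y)).indicator fun x => ENNReal.ofReal x * ENNReal.ofReal (g y) := by
      ext x
      by_cases hx : x ∈ Ioo 0 (κ * y)
      · rw [indicator_of_mem hx, indicator_of_mem (show (x, y) ∈ _ from hx),
          ENNReal.ofReal_mul hx.1.le]
      · rw [indicator_of_notMem hx, indicator_of_notMem (show (x, y) ∉ _ from hx)]
    rw [hslice, lintegral_indicator measurableSet_Ioo,
      lintegral_mul_const _ ENNReal.measurable_ofReal, lintegral_Ioo_zero_ofReal (by positivity),
      indicator_of_mem (mem_Ioi.2 hy), ENNReal.ofReal_mul (by positivity)]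

lemma setLIntegral_cone_mul_exp_neg_mul_sq {C b κ : ℝ} (hC : 0 ≤ C) (hb : 0 < b) (hκ : 0 ≤ κ) :
    ∫⁻ p in {p : ℝ × ℝ | 0 < p.1 ∧ p.1 < κ * p.2},
        ENNReal.ofReal (C * p.1 * p.2 * exp (-(b * p.2 ^ 2)))
      = ENNReal.ofReal (C * κ ^ 2 / (4 * b ^ 2)) := by
  set S := {p : ℝ × ℝ | 0 < p.1 ∧ p.1 < κ * p.2}
  set g : ℝ → ℝ := fun y => C * y * exp (-(b * y ^ 2))
  have hS : MeasurableSet S := (measurableSet_lt measurable_const measurable_fst).inter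
    (measurableSet_lt measurable_fst (measurable_const.mul measurable_snd))
  have hF : Measurable fun p : ℝ × ℝ => ENNReal.ofReal (p.1 * g p.2) := by fun_prop
  have hFg (p : ℝ × ℝ) : C * p.1 * p.2 * exp (-(b * p.2 ^ 2)) = p.1 * g p.2 := by
    simp only [g]
    ring
  calc _ = ∫⁻ p, S.indicator (fun p => ENNReal.ofReal (p.1 * g p.2)) p := by
        simp_rw [hFg, lintegral_indicator hS]
    _ = ∫⁻ y, ∫⁻ x, S.indicator (fun p => ENNReal.ofReal (p.1 * g p.2)) (x, y) := by
        rw [Measure.volume_eq_prod, lintegral_prod_symm _ (hF.indicator hS).aemeasurable]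
    _ = ∫⁻ y in Ioi 0,
          ENNReal.ofReal (C * κ ^ 2 / 2) * ENNReal.ofReal (y ^ 3 * exp (-(b * y ^ 2))) := by
        rw [lintegral_congr (lintegral_indicator_cone_slice hκ g),
          lintegral_indicator measurableSet_Ioi]
        refine setLIntegral_congr_fun measurableSet_Ioi fun y _ => ?_
        rw [← ENNReal.ofReal_mul (by positivity)]
        simp only [g]
        ring_nf
    _ = ENNReal.ofReal (C * κ ^ 2 / (4 * b ^ 2)) := by
        rw [lintegral_const_mul _ (by fun_prop), lintegral_Ioi_pow_three_mul_exp_neg_mul_sq hb,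
          ← ENNReal.ofReal_mul (by positivity)]
        ring_nf

lemma min_one_sq {d : ℝ} (hd : 0 ≤ d) : min 1 d ^ 2 = min 1 (d ^ 2) := by
  rcases le_total 1 d with h | h
  · rw [min_eq_left h, min_eq_left (one_le_pow₀ h), one_pow]
  · rw [min_eq_right h, min_eq_right (pow_le_one₀ hd h)]

/-- Nearest-interferer-only closed form (Remark 2): with `μ₁` the joint law of the distances
`(R₀, R₁)` to the two nearest points of a planar PPP of intensity `λ` (density
`(2πλ)² r₀ r₁ e^{−πλ r₁²}` on `{0 < r₀ < r₁}`), the `μ₁`-measure of the event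
`(1 + θ r₀^α r₁^{−α})⁻¹ > γ` equals `min(1, ((1−γ)/(γθ))^{2/α})`. -/
theorem stmt8 (lam α θ γ : ℝ)
    (hlam : 0 < lam) (hα : 0 < α) (hθ : 0 < θ) (hγ0 : 0 < γ) (hγ1 : γ < 1) :
    (Measure.withDensity
        ((volume : Measure (ℝ × ℝ)).restrict {p : ℝ × ℝ | 0 < p.1 ∧ p.1 < p.2})
        fun p => ENNReal.ofReal
          ((2 * π * lam) ^ 2 * p.1 * p.2 * Real.exp (-(π * lam * p.2 ^ 2))))
      {p : ℝ × ℝ | γ < (1 + θ * p.1 ^ α * p.2 ^ (-α))⁻¹}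
      = ENNReal.ofReal (min 1 (((1 - γ) / (γ * θ)) ^ (2 / α))) := by
  set c := (1 - γ) / (γ * θ)
  have hc : 0 < c := div_pos (by linarith) (by positivity)
  have hsupport : MeasurableSet {p : ℝ × ℝ | 0 < p.1 ∧ p.1 < p.2} :=
    (measurableSet_lt measurable_const measurable_fst).inter
      (measurableSet_lt measurable_fst measurable_snd)
  rw [withDensity_apply', Measure.restrict_restrict' hsupport,
    setOf_lt_inv_one_add_mul_rpow_inter_eq hγ0 hγ1 hθ hα,
    setLIntegral_cone_mul_exp_neg_mul_sq (by positivity) (by positivity)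
      (le_min zero_le_one (rpow_nonneg hc.le _))]
  have hκ_sq : min 1 (c ^ α⁻¹) ^ 2 = min 1 (c ^ (2 / α)) := by
    rw [min_one_sq (rpow_nonneg hc.le _), ← rpow_mul_natCast hc.le]
    congr 2
    push_cast
    ring
  rw [← hκ_sq]
  congr 1
  field_simp
  norm_num
end

section
/- Fix λ > 0, α > 2, θ > 0, p_t > 0, σ² ≥ 0, r_c > 0 and γ ∈ (0,1). Define G(r) = 2πλ r^{2−α}/(α−2) and s(r) = (θ/p_t)(p_t G(r) + σ²) for r > 0, and let μ be the product measure on (0,r_c) × (0,∞) with density (2r₀/r_c²) · 2πλ r₁ exp(−πλ r₁²) with respect to Lebesgue measure. For r > 0, let K₁(r) = x(r)^{1/α}, where x(r) is the unique positive real with exp(−s(r) x) = γ (1 + θ r^{−α} x). Then μ of the event {(r₀,r₁) : exp(−s(r₁) r₀^α) > γ (1 + θ r₀^α r₁^{−α})} equals ∫₀^∞ min(1, K₁(r)²/r_c²) · 2πλ r exp(−πλ r²) dr. -/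
open MeasureTheory Real Set
open scoped ENNReal

lemma aux_lin (rc m : ℝ) (hrc : 0 < rc) (hm : 0 < m) :
    ∫⁻ t in Ioo (0:ℝ) m, ENNReal.ofReal (2 * t / rc ^ 2) = ENNReal.ofReal (m ^ 2 / rc ^ 2) := by
  rw [← ofReal_integral_eq_lintegral_ofReal]
  · congr 1
    rw [← integral_Ioc_eq_integral_Ioo, ← intervalIntegral.integral_of_le hm.le]
    have h1 : (fun t : ℝ => 2 * t / rc ^ 2) = fun t : ℝ => (2 / rc ^ 2) * t := by
      funext t; ring
    rw [h1, intervalIntegral.integral_const_mul, integral_id]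
    field_simp
    ring
  · apply (Continuous.integrableOn_Icc (by fun_prop)).mono_set Ioo_subset_Icc_self
  · filter_upwards [ae_restrict_mem measurableSet_Ioo] with t ht
    have := ht.1
    positivity



/-- Dominant interferer-based approximation of the SINR meta distribution for Matérn
cluster process networks, as an exact measure identity.  `μ` is the joint law of the
serving distance `R₀` (uniform in a disk of radius `r_c`, density `2r₀/r_c²`) and the
independent nearest-interferer distance `R₁` (density `2πλ r₁ e^{−πλ r₁²}`);
`s r = (θ/p_t)(p_t G r + σ²)` with `G r = 2πλ r^{2−α}/(α−2)`; for `r > 0`, `x r` is the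
unique positive solution of `exp(−s(r)x) = γ(1 + θ r^{−α} x)` and `K₁ r = (x r)^{1/α}`.
The `μ`-measure of the success event equals
`∫₀^∞ min(1, K₁(r)²/r_c²) · 2πλ r e^{−πλ r²} dr`. -/
theorem stmt11 (lam α θ pt σ2 rc γ : ℝ)
    (hlam : 0 < lam) (hα : 2 < α) (hθ : 0 < θ) (hpt : 0 < pt) (hσ : 0 ≤ σ2) (hrc : 0 < rc)
    (hγ0 : 0 < γ) (hγ1 : γ < 1)
    (G s : ℝ → ℝ)
    (hG : ∀ r, G r = 2 * π * lam * r ^ (2 - α) / (α - 2))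
    (hs : ∀ r, s r = θ / pt * (pt * G r + σ2))
    (x : ℝ → ℝ)
    (hx : ∀ r, 0 < r → 0 < x r ∧
      Real.exp (-(s r * x r)) = γ * (1 + θ * r ^ (-α) * x r)) :
    (Measure.withDensity
        ((volume : Measure (ℝ × ℝ)).restrict (Set.Ioo 0 rc ×ˢ Set.Ioi 0))
        fun p => ENNReal.ofReal
          (2 * p.1 / rc ^ 2 * (2 * π * lam * p.2 * Real.exp (-(π * lam * p.2 ^ 2)))))
      {p : ℝ × ℝ |
        γ * (1 + θ * p.1 ^ α * p.2 ^ (-α)) < Real.exp (-(s p.2 * p.1 ^ α))}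
      = ∫⁻ r in Set.Ioi (0 : ℝ),
          ENNReal.ofReal
            (min 1 ((x r ^ (1 / α)) ^ 2 / rc ^ 2) *
              (2 * π * lam * r * Real.exp (-(π * lam * r ^ 2)))) := by
  have hπ := Real.pi_pos
  have hα0 : (0:ℝ) < α := by linarith
  have hsm : Measurable s := by
    have : s = fun r => θ / pt * (pt * (2 * π * lam * r ^ (2 - α) / (α - 2)) + σ2) :=
      funext fun r => by rw [hs, hG]
    rw [this]; fun_prop
  have hspos : ∀ r : ℝ, 0 < r → 0 < s r := by
    intro r hr
    rw [hs, hG]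
    have h1 : 0 < r ^ (2 - α) := Real.rpow_pos_of_pos hr _
    have h2 : 0 < 2 * π * lam * r ^ (2 - α) / (α - 2) := by
      apply div_pos (by positivity) (by linarith)
    positivity
  set K : ℝ → ℝ := fun r => x r ^ (1 / α) with hKdef
  have hKpos : ∀ r : ℝ, 0 < r → 0 < K r := fun r hr =>
    Real.rpow_pos_of_pos (hx r hr).1 _
  -- key pointwise equivalence
  have key : ∀ r : ℝ, 0 < r → ∀ r₀ : ℝ, 0 < r₀ →
      (γ * (1 + θ * r₀ ^ α * r ^ (-α)) < Real.exp (-(s r * r₀ ^ α)) ↔ r₀ < K r) := by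
    intro r hr r₀ hr₀
    obtain ⟨hxpos, hxeq⟩ := hx r hr
    have hc : 0 < s r := hspos r hr
    have hd : 0 < θ * r ^ (-α) := by
      have := Real.rpow_pos_of_pos hr (-α); positivity
    have ht : 0 < r₀ ^ α := Real.rpow_pos_of_pos hr₀ _
    have hiff : ∀ t : ℝ, 0 < t →
        (γ * (1 + θ * t * r ^ (-α)) < Real.exp (-(s r * t)) ↔ t < x r) := by
      intro t _
      constructor
      · intro h
        by_contra hle
        push_neg at hle
        have h1 : Real.exp (-(s r * t)) ≤ Real.exp (-(s r * x r)) := by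
          apply Real.exp_le_exp.2; nlinarith
        have h2 : γ * (1 + θ * r ^ (-α) * x r) ≤ γ * (1 + θ * t * r ^ (-α)) := by
          apply mul_le_mul_of_nonneg_left _ hγ0.le
          have h3 : θ * r ^ (-α) * x r ≤ θ * r ^ (-α) * t :=
            mul_le_mul_of_nonneg_left hle hd.le
          have h4 : θ * t * r ^ (-α) = θ * r ^ (-α) * t := by ring
          linarith
        rw [hxeq] at h1
        linarith
      · intro h
        have h1 : Real.exp (-(s r * x r)) < Real.exp (-(s r * t)) := by
          apply Real.exp_lt_exp.2; nlinarith
        have h2 : γ * (1 + θ * t * r ^ (-α)) < γ * (1 + θ * r ^ (-α) * x r) := by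
          apply mul_lt_mul_of_pos_left _ hγ0
          have h3 : θ * r ^ (-α) * t < θ * r ^ (-α) * x r :=
            mul_lt_mul_of_pos_left h hd
          have h4 : θ * t * r ^ (-α) = θ * r ^ (-α) * t := by ring
          linarith
        rw [hxeq] at h1
        linarith
    rw [hiff _ ht]
    rw [show K r = x r ^ (1/α) from rfl, one_div]
    have hK2 : (x r ^ α⁻¹) ^ α = x r := Real.rpow_inv_rpow hxpos.le (ne_of_gt hα0)
    conv_lhs => rw [← hK2]
    exact Real.rpow_lt_rpow_iff hr₀.le (Real.rpow_pos_of_pos hxpos _).le hα0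
  -- set up notation
  set S : Set (ℝ × ℝ) := Set.Ioo 0 rc ×ˢ Set.Ioi 0 with hSdef
  set A : Set (ℝ × ℝ) :=
    {p : ℝ × ℝ | γ * (1 + θ * p.1 ^ α * p.2 ^ (-α)) < Real.exp (-(s p.2 * p.1 ^ α))}
    with hAdef
  set D : ℝ × ℝ → ℝ≥0∞ := fun p => ENNReal.ofReal
    (2 * p.1 / rc ^ 2 * (2 * π * lam * p.2 * Real.exp (-(π * lam * p.2 ^ 2)))) with hDdef
  have hA : MeasurableSet A := by
    apply measurableSet_lt
    · fun_prop
    · fun_prop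
  have hS : MeasurableSet S := measurableSet_Ioo.prod measurableSet_Ioi
  have hDm : Measurable D := by fun_prop
  have hFm : Measurable ((A ∩ S).indicator D) := hDm.indicator (hA.inter hS)
  rw [withDensity_apply _ hA, Measure.restrict_restrict hA,
    ← lintegral_indicator (hA.inter hS) _, Measure.volume_eq_prod,
    lintegral_prod_symm _ hFm.aemeasurable,
    ← lintegral_indicator measurableSet_Ioi _]
  refine lintegral_congr fun r => ?_
  by_cases hr : 0 < r
  · -- main case
    have hC : 0 ≤ 2 * π * lam * r * Real.exp (-(π * lam * r ^ 2)) := by positivity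
    set m : ℝ := min rc (K r) with hmdef
    have hm : 0 < m := lt_min hrc (hKpos r hr)
    have hset : (fun r₀ => (A ∩ S).indicator D (r₀, r)) =
        (Ioo 0 m).indicator (fun r₀ => ENNReal.ofReal (2 * r₀ / rc ^ 2) *
          ENNReal.ofReal (2 * π * lam * r * Real.exp (-(π * lam * r ^ 2)))) := by
      funext r₀
      have hmem : (r₀, r) ∈ A ∩ S ↔ r₀ ∈ Ioo 0 m := by
        constructor
        · rintro ⟨ha, hio, -⟩
          exact ⟨hio.1, lt_min hio.2 ((key r hr r₀ hio.1).1 ha)⟩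
        · rintro ⟨h0, hlt⟩
          refine ⟨(key r hr r₀ h0).2 (lt_of_lt_of_le hlt (min_le_right _ _)),
            ⟨h0, lt_of_lt_of_le hlt (min_le_left _ _)⟩, hr⟩
      by_cases h : r₀ ∈ Ioo 0 m
      · rw [indicator_of_mem (hmem.2 h), indicator_of_mem h, hDdef]
        have h0 : 0 ≤ 2 * r₀ / rc ^ 2 := by have := h.1; positivity
        exact ENNReal.ofReal_mul h0
      · rw [indicator_of_notMem (fun hc => h (hmem.1 hc)), indicator_of_notMem h]
    rw [hset, lintegral_indicator measurableSet_Ioo _,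
      indicator_of_mem (mem_Ioi.2 hr),
      lintegral_mul_const _ (by fun_prop), aux_lin rc m hrc hm]
    have hKnn : 0 ≤ K r := (hKpos r hr).le
    have hmin : m ^ 2 / rc ^ 2 = min 1 (K r ^ 2 / rc ^ 2) := by
      rcases le_total rc (K r) with h | h
      · rw [hmdef, min_eq_left h, div_self (by positivity : (rc:ℝ) ^ 2 ≠ 0), eq_comm]
        exact min_eq_left ((one_le_div (by positivity)).2 (pow_le_pow_left₀ hrc.le h 2))
      · rw [hmdef, min_eq_right h, eq_comm]
        exact min_eq_right ((div_le_one (by positivity)).2 (pow_le_pow_left₀ hKnn h 2))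
    rw [hmin, ← ENNReal.ofReal_mul (le_min zero_le_one (by positivity))]
  · -- r ≤ 0
    push_neg at hr
    rw [indicator_of_notMem (by simpa using hr)]
    have : ∀ r₀ : ℝ, (A ∩ S).indicator D (r₀, r) = 0 := by
      intro r₀
      apply indicator_of_notMem
      rintro ⟨-, -, h2⟩
      exact absurd h2 (by simpa using hr)
    simp [this]
end

section
/- For all reals α > 2, θ > 0 and b > 0, with δ := 2/α, the improper integral ∫₀^∞ (1 − (1 + θ v^{−α})^{−b}) · 2v dv converges and equals θ^{δ} · Γ(1−δ) · Γ(b+δ) / Γ(b), where Γ is the real Gamma function. -/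
/-!
With `δ = 2/α`, substituting `u = θ v^(-α)` turns the integral into
`δ θ^δ ∫₀^∞ (1 - (1 + u)^(-b)) u^(-δ-1) du`.
Integrating by parts against the primitive `-u^(-δ)/δ` of `u^(-δ-1)` (the boundary terms vanish
because `0 ≤ 1 - (1 + u)^(-b) ≤ min 1 (b u)` and `0 < δ < 1`) leaves `(b/δ)` times the Beta integral
`∫₀^∞ u^(-δ) (1 + u)^(-b-1) du = B(1 - δ, b + δ)`, which the substitution `u = x/(1 - x)` reduces
to Euler's Beta integral on `(0, 1)`.
-/

open MeasureTheory Real Set Filter Topology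

lemma hasDerivAt_div_one_sub {x : ℝ} (hx : x ≠ 1) :
    HasDerivAt (fun x : ℝ => x / (1 - x)) ((1 - x) ^ 2)⁻¹ x := by
  have hx' : 1 - x ≠ 0 := sub_ne_zero.2 hx.symm
  refine ((hasDerivAt_id' x).div ((hasDerivAt_id' x).const_sub 1) hx').congr_deriv ?_
  field_simp
  ring

lemma monotoneOn_div_one_sub : MonotoneOn (fun x : ℝ => x / (1 - x)) (Iio 1) := by
  intro x hx y hy hxy
  have hx' : 0 < 1 - x := sub_pos.2 hx
  have hy' : 0 < 1 - y := sub_pos.2 hy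
  simp only
  rw [div_le_div_iff₀ hx' hy']
  nlinarith

lemma image_div_one_sub_Ioo : (fun x : ℝ => x / (1 - x)) '' Ioo 0 1 = Ioi 0 := by
  ext u
  constructor
  · rintro ⟨x, hx, rfl⟩
    exact div_pos hx.1 (sub_pos.2 hx.2)
  · intro (hu : 0 < u)
    refine ⟨u / (1 + u), ⟨by positivity, (div_lt_one (by positivity)).2 (by linarith)⟩, ?_⟩
    field_simp
    ring

section BetaIntegral

variable {p q : ℝ}

lemma ofReal_rpow_mul_one_sub_rpow {x : ℝ} (hx : x ∈ Icc (0 : ℝ) 1) :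
    ((x ^ (p - 1) * (1 - x) ^ (q - 1) : ℝ) : ℂ)
      = (x : ℂ) ^ ((p : ℂ) - 1) * (1 - (x : ℂ)) ^ ((q : ℂ) - 1) := by
  rw [Complex.ofReal_mul, Complex.ofReal_cpow hx.1, Complex.ofReal_cpow (sub_nonneg.2 hx.2)]
  push_cast
  rfl

lemma integrableOn_rpow_mul_one_sub_rpow (hp : 0 < p) (hq : 0 < q) :
    IntegrableOn (fun x : ℝ => x ^ (p - 1) * (1 - x) ^ (q - 1)) (Ioo 0 1) := by
  have h := Complex.betaIntegral_convergent (u := p) (v := q) (by simpa) (by simpa)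
  rw [intervalIntegrable_iff_integrableOn_Ioo_of_le zero_le_one] at h
  refine IntegrableOn.congr_fun (Integrable.re h) (fun x hx => ?_) measurableSet_Ioo
  rw [← ofReal_rpow_mul_one_sub_rpow (Ioo_subset_Icc_self hx), RCLike.re_to_complex,
    Complex.ofReal_re]

lemma integral_rpow_mul_one_sub_rpow (hp : 0 < p) (hq : 0 < q) :
    ∫ x in Ioo (0 : ℝ) 1, x ^ (p - 1) * (1 - x) ^ (q - 1)
      = Gamma p * Gamma q / Gamma (p + q) := by
  have h := Complex.betaIntegral_eq_Gamma_mul_div p q (by simpa) (by simpa)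
  rw [Complex.betaIntegral, ← intervalIntegral.integral_congr
      (fun x hx => ofReal_rpow_mul_one_sub_rpow (uIcc_of_le (zero_le_one' ℝ) ▸ hx)),
    intervalIntegral.integral_ofReal, intervalIntegral.integral_of_le zero_le_one,
    integral_Ioc_eq_integral_Ioo, ← Complex.ofReal_add, Complex.Gamma_ofReal,
    Complex.Gamma_ofReal, Complex.Gamma_ofReal] at h
  exact_mod_cast h

lemma rpow_mul_one_add_rpow_div_one_sub {x : ℝ} (hx : x ∈ Ioo (0 : ℝ) 1) :
    ((1 - x) ^ 2)⁻¹ * ((x / (1 - x)) ^ (p - 1) * (1 + x / (1 - x)) ^ (-(p + q)))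
      = x ^ (p - 1) * (1 - x) ^ (q - 1) := by
  have hx' : 0 < 1 - x := sub_pos.2 hx.2
  have hpow : (1 - x) ^ (q - 1) = (1 - x) ^ (p + q) / (1 - x) ^ (p - 1) / (1 - x) ^ 2 := by
    rw [← rpow_two, ← rpow_sub hx', ← rpow_sub hx']
    ring_nf
  rw [show 1 + x / (1 - x) = (1 - x)⁻¹ by field_simp; ring, div_rpow hx.1.le hx'.le,
    inv_rpow hx'.le, rpow_neg hx'.le, inv_inv, hpow]
  ring

lemma integrableOn_rpow_mul_one_add_rpow (hp : 0 < p) (hq : 0 < q) :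
    IntegrableOn (fun u : ℝ => u ^ (p - 1) * (1 + u) ^ (-(p + q))) (Ioi 0) := by
  rw [← image_div_one_sub_Ioo, integrableOn_image_iff_integrableOn_deriv_smul_of_monotoneOn
    measurableSet_Ioo (fun x hx => (hasDerivAt_div_one_sub hx.2.ne).hasDerivWithinAt)
    (monotoneOn_div_one_sub.mono Ioo_subset_Iio_self)]
  exact (integrableOn_rpow_mul_one_sub_rpow hp hq).congr_fun
    (fun x hx => (rpow_mul_one_add_rpow_div_one_sub hx).symm) measurableSet_Ioo

lemma integral_rpow_mul_one_add_rpow (hp : 0 < p) (hq : 0 < q) :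
    ∫ u in Ioi (0 : ℝ), u ^ (p - 1) * (1 + u) ^ (-(p + q)) = Gamma p * Gamma q / Gamma (p + q) := by
  rw [← image_div_one_sub_Ioo, integral_image_eq_integral_deriv_smul_of_monotoneOn
    measurableSet_Ioo (fun x hx => (hasDerivAt_div_one_sub hx.2.ne).hasDerivWithinAt)
    (monotoneOn_div_one_sub.mono Ioo_subset_Iio_self),
    setIntegral_congr_fun measurableSet_Ioo
      (fun x hx => (smul_eq_mul ..).trans (rpow_mul_one_add_rpow_div_one_sub hx)),
    integral_rpow_mul_one_sub_rpow hp hq]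

end BetaIntegral

section OneSubOneAddRpowNeg

variable {b δ : ℝ}

lemma one_sub_one_add_rpow_neg_nonneg (hb : 0 ≤ b) {u : ℝ} (hu : 0 ≤ u) :
    0 ≤ 1 - (1 + u) ^ (-b) :=
  sub_nonneg.2 (rpow_le_one_of_one_le_of_nonpos (by linarith) (by linarith))

lemma one_sub_one_add_rpow_neg_le_one {u : ℝ} (hu : 0 ≤ u) : 1 - (1 + u) ^ (-b) ≤ 1 :=
  sub_le_self _ (rpow_nonneg (by linarith) _)

lemma one_sub_one_add_rpow_neg_le_mul (hb : 0 ≤ b) {u : ℝ} (hu : 0 ≤ u) :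
    1 - (1 + u) ^ (-b) ≤ b * u := by
  have h1u : 0 < 1 + u := by linarith
  have hlog : log (1 + u) ≤ u := by linarith [log_le_sub_one_of_pos h1u]
  have hexp := add_one_le_exp (log (1 + u) * -b)
  rw [rpow_def_of_pos h1u]
  nlinarith [mul_le_mul_of_nonneg_left hlog hb]

lemma integrableOn_one_sub_one_add_rpow_neg_mul_rpow_Ioc (hδ : δ < 1) (hb : 0 ≤ b) :
    IntegrableOn (fun u : ℝ => (1 - (1 + u) ^ (-b)) * u ^ (-δ - 1)) (Ioc 0 1) := by
  have hdom : IntegrableOn (fun u : ℝ => b * u ^ (-δ)) (Ioc 0 1) :=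
    ((intervalIntegrable_iff_integrableOn_Ioc_of_le zero_le_one).1
      (intervalIntegral.intervalIntegrable_rpow' (by linarith))).const_mul b
  refine hdom.mono' (by fun_prop) ((ae_restrict_iff' measurableSet_Ioc).2 (.of_forall ?_))
  rintro u ⟨hu, -⟩
  rw [norm_of_nonneg (mul_nonneg (one_sub_one_add_rpow_neg_nonneg hb hu.le) (by positivity))]
  calc (1 - (1 + u) ^ (-b)) * u ^ (-δ - 1) ≤ b * u * u ^ (-δ - 1) := by
        gcongr
        exact one_sub_one_add_rpow_neg_le_mul hb hu.le
    _ = b * u ^ (-δ - 1 + 1) := by rw [rpow_add_one hu.ne']; ring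
    _ = b * u ^ (-δ) := by rw [sub_add_cancel]

lemma integrableOn_one_sub_one_add_rpow_neg_mul_rpow_Ioi_one (hδ : 0 < δ) (hb : 0 ≤ b) :
    IntegrableOn (fun u : ℝ => (1 - (1 + u) ^ (-b)) * u ^ (-δ - 1)) (Ioi 1) := by
  refine (integrableOn_Ioi_rpow_of_lt (a := -δ - 1) (by linarith) one_pos).mono' (by fun_prop)
    ((ae_restrict_iff' measurableSet_Ioi).2 (.of_forall fun u (hu : 1 < u) => ?_))
  have hu0 : 0 ≤ u := by linarith
  rw [norm_of_nonneg (mul_nonneg (one_sub_one_add_rpow_neg_nonneg hb hu0) (by positivity))]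
  exact mul_le_of_le_one_left (by positivity) (one_sub_one_add_rpow_neg_le_one hu0)

lemma integrableOn_one_sub_one_add_rpow_neg_mul_rpow (hδ₀ : 0 < δ) (hδ₁ : δ < 1) (hb : 0 ≤ b) :
    IntegrableOn (fun u : ℝ => (1 - (1 + u) ^ (-b)) * u ^ (-δ - 1)) (Ioi 0) := by
  rw [← Ioc_union_Ioi_eq_Ioi zero_le_one]
  exact (integrableOn_one_sub_one_add_rpow_neg_mul_rpow_Ioc hδ₁ hb).union
    (integrableOn_one_sub_one_add_rpow_neg_mul_rpow_Ioi_one hδ₀ hb)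

lemma tendsto_one_sub_one_add_rpow_neg_mul_rpow_nhdsGT_zero (hδ : δ < 1) (hb : 0 ≤ b) :
    Tendsto (fun u : ℝ => (1 - (1 + u) ^ (-b)) * u ^ (-δ)) (𝓝[>] 0) (𝓝 0) := by
  have hlim : Tendsto (fun u : ℝ => b * u ^ (1 - δ)) (𝓝[>] 0) (𝓝 0) := by
    have := ((continuousAt_rpow_const 0 (1 - δ) (Or.inr (by linarith))).tendsto.mono_left
      (nhdsWithin_le_nhds (s := Ioi 0))).const_mul b
    rwa [zero_rpow (by linarith), mul_zero] at this
  refine squeeze_zero' ?_ ?_ hlim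
  · filter_upwards [self_mem_nhdsWithin] with u (hu : 0 < u)
    exact mul_nonneg (one_sub_one_add_rpow_neg_nonneg hb hu.le) (by positivity)
  · filter_upwards [self_mem_nhdsWithin] with u (hu : 0 < u)
    calc (1 - (1 + u) ^ (-b)) * u ^ (-δ) ≤ b * u * u ^ (-δ) := by
          gcongr
          exact one_sub_one_add_rpow_neg_le_mul hb hu.le
      _ = b * u ^ (-δ + 1) := by rw [rpow_add_one hu.ne']; ring
      _ = b * u ^ (1 - δ) := by rw [neg_add_eq_sub]

lemma tendsto_one_sub_one_add_rpow_neg_mul_rpow_atTop (hδ : 0 < δ) (hb : 0 ≤ b) :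
    Tendsto (fun u : ℝ => (1 - (1 + u) ^ (-b)) * u ^ (-δ)) atTop (𝓝 0) := by
  refine squeeze_zero' ?_ ?_ (tendsto_rpow_neg_atTop hδ)
  · filter_upwards [eventually_ge_atTop 0] with u hu
    exact mul_nonneg (one_sub_one_add_rpow_neg_nonneg hb hu) (by positivity)
  · filter_upwards [eventually_ge_atTop 0] with u hu
    exact mul_le_of_le_one_left (by positivity) (one_sub_one_add_rpow_neg_le_one hu)

lemma integral_one_sub_one_add_rpow_neg_mul_rpow_eq (hδ₀ : 0 < δ) (hδ₁ : δ < 1) (hb : 0 ≤ b) :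
    ∫ u in Ioi (0 : ℝ), (1 - (1 + u) ^ (-b)) * u ^ (-δ - 1)
      = b / δ * ∫ u in Ioi (0 : ℝ), u ^ (-δ) * (1 + u) ^ (-b - 1) := by
  have hβ := integrableOn_rpow_mul_one_add_rpow (p := 1 - δ) (q := b + δ) (by linarith)
    (by linarith)
  rw [show 1 - δ - 1 = -δ by ring, show -(1 - δ + (b + δ)) = -b - 1 by ring] at hβ
  have hparts := integral_Ioi_mul_deriv_eq_deriv_mul (a := 0) (a' := 0) (b' := 0)
    (u := fun x => 1 - (1 + x) ^ (-b)) (u' := fun x => b * (1 + x) ^ (-b - 1))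
    (v := fun x => x ^ (-δ) * -δ⁻¹) (v' := fun x => x ^ (-δ - 1))
    (fun x (hx : 0 < x) => by
      refine (((hasDerivAt_id' x).const_add 1).rpow_const (p := -b)
        (Or.inl (by linarith))).const_sub 1 |>.congr_deriv ?_
      ring)
    (fun x (hx : 0 < x) => by
      refine ((hasDerivAt_rpow_const (p := -δ) (Or.inl hx.ne')).mul_const (-δ⁻¹)).congr_deriv ?_
      field_simp)
    (integrableOn_one_sub_one_add_rpow_neg_mul_rpow hδ₀ hδ₁ hb)
    (IntegrableOn.congr_fun (hβ.const_mul (-(b / δ)))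
      (fun x _ => by simp only [Pi.mul_apply]; ring) measurableSet_Ioi)
    (by simpa [Pi.mul_def, mul_assoc] using
      (tendsto_one_sub_one_add_rpow_neg_mul_rpow_nhdsGT_zero hδ₁ hb).mul_const (-δ⁻¹))
    (by simpa [Pi.mul_def, mul_assoc] using
      (tendsto_one_sub_one_add_rpow_neg_mul_rpow_atTop hδ₀ hb).mul_const (-δ⁻¹))
  rw [hparts, sub_self, zero_sub, ← integral_neg, ← integral_const_mul]
  congr 1 with x
  ring

lemma integral_one_sub_one_add_rpow_neg_mul_rpow (hδ₀ : 0 < δ) (hδ₁ : δ < 1) (hb : 0 < b) :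
    ∫ u in Ioi (0 : ℝ), (1 - (1 + u) ^ (-b)) * u ^ (-δ - 1)
      = Gamma (1 - δ) * Gamma (b + δ) / (δ * Gamma b) := by
  have hβ := integral_rpow_mul_one_add_rpow (p := 1 - δ) (q := b + δ) (by linarith) (by linarith)
  rw [show 1 - δ - 1 = -δ by ring, show -(1 - δ + (b + δ)) = -b - 1 by ring,
    show 1 - δ + (b + δ) = b + 1 by ring, Gamma_add_one hb.ne'] at hβ
  rw [integral_one_sub_one_add_rpow_neg_mul_rpow_eq hδ₀ hδ₁ hb.le, hβ]
  field_simp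

end OneSubOneAddRpowNeg

section PolarSubstitution

variable (φ : ℝ → ℝ) {α θ : ℝ}

/-- The pullback along `v ↦ v^(-α)` of `y ↦ δ θ^(δ+1) ψ (θ y)`, where `δ = 2/α` and
`ψ u = φ u u^(-δ-1)`. -/
lemma abs_neg_mul_rpow_smul_comp_mul_rpow_neg (hα : 0 < α) (hθ : 0 < θ) {v : ℝ} (hv : 0 < v) :
    (|-α| * v ^ (-α - 1)) • (2 / α * θ ^ (2 / α + 1) *
        (φ (θ * v ^ (-α)) * (θ * v ^ (-α)) ^ (-(2 / α) - 1)))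
      = φ (θ * v ^ (-α)) * (2 * v) := by
  have hθpow : θ ^ (2 / α + 1) * θ ^ (-(2 / α) - 1) = 1 := by
    rw [← rpow_add hθ]; ring_nf; exact rpow_zero θ
  have hvpow : v ^ (-α - 1) * (v ^ (-α)) ^ (-(2 / α) - 1) = v := by
    rw [← rpow_mul hv.le, ← rpow_add hv]
    convert rpow_one v using 2
    field_simp
    ring
  rw [smul_eq_mul, abs_neg, abs_of_pos hα, mul_rpow hθ.le (by positivity)]
  calc α * v ^ (-α - 1) * (2 / α * θ ^ (2 / α + 1) *
        (φ (θ * v ^ (-α)) * (θ ^ (-(2 / α) - 1) * (v ^ (-α)) ^ (-(2 / α) - 1))))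
      = φ (θ * v ^ (-α)) * (2 * α / α * (θ ^ (2 / α + 1) * θ ^ (-(2 / α) - 1)) *
          (v ^ (-α - 1) * (v ^ (-α)) ^ (-(2 / α) - 1))) := by ring
    _ = φ (θ * v ^ (-α)) * (2 * v) := by rw [hθpow, hvpow, mul_div_cancel_right₀ _ hα.ne']; ring

lemma integrableOn_comp_mul_rpow_neg_iff (hα : 0 < α) (hθ : 0 < θ) :
    IntegrableOn (fun v => φ (θ * v ^ (-α)) * (2 * v)) (Ioi 0) ↔
      IntegrableOn (fun u => φ u * u ^ (-(2 / α) - 1)) (Ioi 0) := by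
  have hscale := integrableOn_Ioi_comp_mul_left_iff (fun u => φ u * u ^ (-(2 / α) - 1)) 0 hθ
  rw [mul_zero] at hscale
  rw [← hscale]
  exact (integrableOn_congr_fun
    (fun v hv => (abs_neg_mul_rpow_smul_comp_mul_rpow_neg φ hα hθ hv).symm)
    measurableSet_Ioi).trans <| (integrableOn_Ioi_comp_rpow_iff (fun y => 2 / α * θ ^ (2 / α + 1) *
      (φ (θ * y) * (θ * y) ^ (-(2 / α) - 1))) (neg_ne_zero.2 hα.ne')).trans <|
    integrable_const_mul_iff (isUnit_iff_ne_zero.2 (by positivity)) _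

lemma integral_comp_mul_rpow_neg (hα : 0 < α) (hθ : 0 < θ) :
    ∫ v in Ioi 0, φ (θ * v ^ (-α)) * (2 * v)
      = 2 / α * θ ^ (2 / α) * ∫ u in Ioi 0, φ u * u ^ (-(2 / α) - 1) := by
  calc ∫ v in Ioi 0, φ (θ * v ^ (-α)) * (2 * v)
      = ∫ v in Ioi 0, (|-α| * v ^ (-α - 1)) • (2 / α * θ ^ (2 / α + 1) *
          (φ (θ * v ^ (-α)) * (θ * v ^ (-α)) ^ (-(2 / α) - 1))) :=
        setIntegral_congr_fun measurableSet_Ioi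
          (fun v hv => (abs_neg_mul_rpow_smul_comp_mul_rpow_neg φ hα hθ hv).symm)
    _ = ∫ y in Ioi 0, 2 / α * θ ^ (2 / α + 1) * (φ (θ * y) * (θ * y) ^ (-(2 / α) - 1)) :=
        integral_comp_rpow_Ioi (fun y => 2 / α * θ ^ (2 / α + 1) *
          (φ (θ * y) * (θ * y) ^ (-(2 / α) - 1))) (neg_ne_zero.2 hα.ne')
    _ = 2 / α * θ ^ (2 / α) * ∫ u in Ioi 0, φ u * u ^ (-(2 / α) - 1) := by
        rw [integral_const_mul, integral_comp_mul_left_Ioi (fun u => φ u * u ^ (-(2 / α) - 1)) 0 hθ,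
          mul_zero, smul_eq_mul, rpow_add_one hθ.ne']
        field_simp

end PolarSubstitution

/-- The Gamma-integral identity underlying the `b`-th moment of the conditional SIR success
probability in Poisson bipolar networks: for `α > 2`, `θ > 0`, `b > 0` and `δ = 2/α`,
`∫₀^∞ (1 − (1 + θ v^{−α})^{−b}) · 2v dv = θ^δ Γ(1−δ) Γ(b+δ) / Γ(b)`. -/
theorem stmt12 (α θ b : ℝ) (hα : 2 < α) (hθ : 0 < θ) (hb : 0 < b) :
    IntegrableOn (fun v : ℝ => (1 - (1 + θ * v ^ (-α)) ^ (-b)) * (2 * v)) (Set.Ioi 0) volume ∧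
    ∫ v in Set.Ioi (0 : ℝ), (1 - (1 + θ * v ^ (-α)) ^ (-b)) * (2 * v)
      = θ ^ (2 / α) * Real.Gamma (1 - 2 / α) * Real.Gamma (b + 2 / α) / Real.Gamma b := by
  have hα₀ : 0 < α := by linarith
  have hδ₀ : 0 < 2 / α := by positivity
  have hδ₁ : 2 / α < 1 := (div_lt_one hα₀).2 hα
  refine ⟨(integrableOn_comp_mul_rpow_neg_iff (fun u => 1 - (1 + u) ^ (-b)) hα₀ hθ).2
    (integrableOn_one_sub_one_add_rpow_neg_mul_rpow hδ₀ hδ₁ hb.le), ?_⟩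
  rw [integral_comp_mul_rpow_neg (fun u => 1 - (1 + u) ^ (-b)) hα₀ hθ,
    integral_one_sub_one_add_rpow_neg_mul_rpow hδ₀ hδ₁ hb]
  field_simp
end

section
/- Fix λ_p > 0 and λ_l > 0, and for r > 0 define H(r) = 2λ_p r + 2πλ_l ∫₀^r (1 − exp(−2λ_p √(r² − ρ²))) dρ and L(r) = exp(−H(r)). Then for every r > 0, the (improper) integral ∫₀^r exp(−2λ_p √(r² − x²))/√(r² − x²) dx converges, L is differentiable at r, and its derivative equals −2(λ_p + 2πλ_l λ_p r ∫₀^r exp(−2λ_p √(r² − x²))/√(r² − x²) dx) · L(r). -/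
/-!
Substituting `x = r sin θ` turns both integrals into integrals over `θ ∈ (0, π/2)`: the singular
one becomes `∫ exp (-c r cos θ) dθ` (with `c = 2λ_p`), whose integrand is bounded, and the one
in `H` becomes `∫ r cos θ (1 - exp (-c r cos θ)) dθ`, whose integrand is smooth in `r`, so it can
be differentiated under the integral sign. Integrating by parts against `sin θ`, the derivative is
`c r ∫ exp (-c r cos θ) dθ`, i.e. `c r` times the singular integral.
-/

open MeasureTheory Real Set intervalIntegral

section SineSubstitution

variable {E : Type*} [NormedAddCommGroup E] [NormedSpace ℝ E] {r : ℝ}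

theorem sqrt_sq_sub_sq_mul_sin {θ : ℝ} (hr : 0 ≤ r) (hθ : 0 ≤ cos θ) :
    √(r ^ 2 - (r * sin θ) ^ 2) = r * cos θ := by
  rw [show r ^ 2 - (r * sin θ) ^ 2 = (r * cos θ) ^ 2 by
      linear_combination -r ^ 2 * sin_sq_add_cos_sq θ,
    sqrt_sq (mul_nonneg hr hθ)]

theorem integrableOn_mul_cos_smul_comp_mul_sin_iff (hr : 0 ≤ r) {g : ℝ → E} :
    IntegrableOn (fun θ => (r * cos θ) • g (r * sin θ)) (Ioo 0 (π / 2)) ↔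
      IntervalIntegrable g volume 0 r := by
  have := integrableOn_Icc_deriv_smul_iff_of_deriv_nonneg (f := fun θ => r * sin θ) (g := g)
    (continuous_const.mul continuous_sin).continuousOn
    (fun θ _ => (hasDerivAt_sin θ).const_mul r)
    (fun θ hθ => mul_nonneg hr (cos_nonneg_of_mem_Icc ⟨by linarith [hθ.1, pi_pos], hθ.2.le⟩))
    pi_div_two_pos.le
  rw [intervalIntegrable_iff_integrableOn_Icc_of_le hr, ← integrableOn_Icc_iff_integrableOn_Ioo]
  simpa using this

theorem integral_mul_cos_smul_comp_mul_sin (hr : 0 ≤ r) (g : ℝ → E) :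
    ∫ θ in Ioo 0 (π / 2), (r * cos θ) • g (r * sin θ) = ∫ x in 0..r, g x := by
  have := integral_Icc_deriv_smul_of_deriv_nonneg (f := fun θ => r * sin θ) (g := g)
    (continuous_const.mul continuous_sin).continuousOn
    (fun θ _ => (hasDerivAt_sin θ).const_mul r)
    (fun θ hθ => mul_nonneg hr (cos_nonneg_of_mem_Icc ⟨by linarith [hθ.1, pi_pos], hθ.2.le⟩))
    pi_div_two_pos.le
  simpa [integral_Icc_eq_integral_Ioo, integral_of_le hr, integral_Ioc_eq_integral_Ioo] using this

end SineSubstitution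

theorem intervalIntegral.hasDerivAt_integral_of_continuous_deriv {E : Type*}
    [NormedAddCommGroup E] [NormedSpace ℝ E] {F F' : ℝ → ℝ → E} {a b x₀ : ℝ}
    (hF : ∀ x, Continuous (F x)) (hF' : Continuous (Function.uncurry F'))
    (hderiv : ∀ x t, HasDerivAt (F · t) (F' x t) x) :
    HasDerivAt (fun x => ∫ t in a..b, F x t) (∫ t in a..b, F' x₀ t) x₀ := by
  obtain ⟨C, hC⟩ := ((isCompact_closedBall x₀ 1).prod isCompact_uIcc).exists_bound_of_continuousOn
    hF'.continuousOn
  refine (hasDerivAt_integral_of_dominated_loc_of_deriv_le (bound := fun _ => C)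
    (Metric.ball_mem_nhds x₀ one_pos) (.of_forall fun x => (hF x).aestronglyMeasurable)
    ((hF x₀).intervalIntegrable a b)
    (hF'.comp (Continuous.prodMk_right x₀)).aestronglyMeasurable
    (ae_of_all _ fun t ht x hx => hC (x, t) ⟨Metric.ball_subset_closedBall hx, uIoc_subset_uIcc ht⟩)
    intervalIntegrable_const (ae_of_all _ fun t _ x _ => hderiv x t)).2

theorem integral_cos_mul_one_sub_exp_add (c : ℝ) :
    ∫ θ in 0..π / 2, (cos θ * (1 - exp (-(c * cos θ))) + c * cos θ ^ 2 * exp (-(c * cos θ))) =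
      c * ∫ θ in 0..π / 2, exp (-(c * cos θ)) := by
  -- the integrand minus `c * exp (-(c * cos θ))` is the derivative of a function vanishing at
  -- both endpoints
  have hG : ∀ θ, HasDerivAt (fun θ => sin θ * (1 - exp (-(c * cos θ))))
      (cos θ * (1 - exp (-(c * cos θ))) + c * cos θ ^ 2 * exp (-(c * cos θ)) -
        c * exp (-(c * cos θ))) θ := fun θ =>
    ((hasDerivAt_sin θ).fun_mul
      (((hasDerivAt_cos θ).const_mul c).fun_neg.exp.const_sub 1)).congr_deriv
      (by linear_combination -c * exp (-(c * cos θ)) * sin_sq_add_cos_sq θ)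
  have hint : ∀ f : ℝ → ℝ, Continuous f → IntervalIntegrable f volume 0 (π / 2) :=
    fun f hf => hf.intervalIntegrable _ _
  have := integral_eq_sub_of_hasDerivAt (fun θ _ => hG θ) (hint _ (by fun_prop))
  rw [integral_sub (hint _ (by fun_prop)) (hint _ (by fun_prop)),
    intervalIntegral.integral_const_mul] at this
  simpa [sub_eq_zero] using this

section ContactDistance

variable (c : ℝ) {r : ℝ}

theorem mul_cos_smul_exp_sqrt_div_sqrt_mul_sin (hr : 0 < r) {θ : ℝ} (hθ : θ ∈ Ioo 0 (π / 2)) :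
    (r * cos θ) • (exp (-(c * √(r ^ 2 - (r * sin θ) ^ 2))) / √(r ^ 2 - (r * sin θ) ^ 2)) =
      exp (-(c * r * cos θ)) := by
  have hcos : 0 < cos θ := cos_pos_of_mem_Ioo ⟨by linarith [hθ.1, pi_pos], hθ.2⟩
  rw [sqrt_sq_sub_sq_mul_sin hr.le hcos.le, smul_eq_mul,
    mul_div_cancel₀ _ (mul_pos hr hcos).ne', mul_assoc]

theorem intervalIntegrable_exp_sqrt_div_sqrt (hr : 0 < r) :
    IntervalIntegrable (fun x => exp (-(c * √(r ^ 2 - x ^ 2))) / √(r ^ 2 - x ^ 2)) volume 0 r := by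
  rw [← integrableOn_mul_cos_smul_comp_mul_sin_iff hr.le]
  refine IntegrableOn.congr_fun ?_
    (fun θ hθ => (mul_cos_smul_exp_sqrt_div_sqrt_mul_sin c hr hθ).symm) measurableSet_Ioo
  exact (by fun_prop : Continuous fun θ => exp (-(c * r * cos θ))).integrableOn_Icc.mono_set
    Ioo_subset_Icc_self

theorem integral_exp_sqrt_div_sqrt (hr : 0 < r) :
    ∫ x in 0..r, exp (-(c * √(r ^ 2 - x ^ 2))) / √(r ^ 2 - x ^ 2) =
      ∫ θ in 0..π / 2, exp (-(c * r * cos θ)) := by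
  rw [← integral_mul_cos_smul_comp_mul_sin hr.le,
    setIntegral_congr_fun measurableSet_Ioo
      fun θ hθ => mul_cos_smul_exp_sqrt_div_sqrt_mul_sin c hr hθ,
    integral_of_le pi_div_two_pos.le, integral_Ioc_eq_integral_Ioo]

theorem integral_one_sub_exp_sqrt (hr : 0 ≤ r) :
    ∫ ρ in 0..r, (1 - exp (-(c * √(r ^ 2 - ρ ^ 2)))) =
      ∫ θ in 0..π / 2, r * cos θ * (1 - exp (-(c * r * cos θ))) := by
  rw [← integral_mul_cos_smul_comp_mul_sin hr, integral_of_le pi_div_two_pos.le,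
    integral_Ioc_eq_integral_Ioo]
  refine setIntegral_congr_fun measurableSet_Ioo fun θ hθ => ?_
  rw [sqrt_sq_sub_sq_mul_sin hr (cos_pos_of_mem_Ioo ⟨by linarith [hθ.1, pi_pos], hθ.2⟩).le,
    smul_eq_mul, mul_assoc c]

theorem hasDerivAt_integral_one_sub_exp_sqrt (hr : 0 < r) :
    HasDerivAt (fun s => ∫ ρ in 0..s, (1 - exp (-(c * √(s ^ 2 - ρ ^ 2)))))
      (c * r * ∫ x in 0..r, exp (-(c * √(r ^ 2 - x ^ 2))) / √(r ^ 2 - x ^ 2)) r := by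
  have hderiv : ∀ s θ, HasDerivAt (fun s => s * cos θ * (1 - exp (-(c * s * cos θ))))
      (cos θ * (1 - exp (-(c * s * cos θ))) + c * s * cos θ ^ 2 * exp (-(c * s * cos θ))) s :=
    fun s θ => ((hasDerivAt_mul_const (cos θ)).fun_mul
      ((((hasDerivAt_id' s).const_mul c).mul_const (cos θ)).fun_neg.exp.const_sub 1)).congr_deriv
        (by ring)
  have hK := hasDerivAt_integral_of_continuous_deriv (a := 0) (b := π / 2) (x₀ := r)
    (fun s => by fun_prop) (by fun_prop) hderiv
  rw [integral_cos_mul_one_sub_exp_add, ← integral_exp_sqrt_div_sqrt c hr] at hK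
  refine hK.congr_of_eventuallyEq ?_
  filter_upwards [lt_mem_nhds hr] with s hs using integral_one_sub_exp_sqrt c hs.le

end ContactDistance

theorem stmt13_general (lp ll : ℝ)
    (H L : ℝ → ℝ)
    (hH : ∀ r, H r = 2 * lp * r +
      2 * π * ll * ∫ ρ in (0 : ℝ)..r, (1 - Real.exp (-(2 * lp * Real.sqrt (r ^ 2 - ρ ^ 2)))))
    (hL : ∀ r, L r = Real.exp (-(H r))) :
    ∀ r : ℝ, 0 < r →
      IntervalIntegrable
        (fun x : ℝ => Real.exp (-(2 * lp * Real.sqrt (r ^ 2 - x ^ 2))) / Real.sqrt (r ^ 2 - x ^ 2))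
        volume 0 r ∧
      HasDerivAt L
        (-(2 * (lp + 2 * π * ll * lp * r *
          ∫ x in (0 : ℝ)..r,
            Real.exp (-(2 * lp * Real.sqrt (r ^ 2 - x ^ 2))) / Real.sqrt (r ^ 2 - x ^ 2))) * L r)
        r := by
  intro r hr
  refine ⟨intervalIntegrable_exp_sqrt_div_sqrt (2 * lp) hr, ?_⟩
  have hHr := ((hasDerivAt_id' r).const_mul (2 * lp)).fun_add
    ((hasDerivAt_integral_one_sub_exp_sqrt (2 * lp) hr).const_mul (2 * π * ll))
  rw [← funext hH] at hHr
  rw [funext hL]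
  convert hHr.fun_neg.exp using 1
  beta_reduce
  ring

/-- Lemma 7 of the paper (contact distance density of a Poisson line Cox process) as a
differentiation-under-the-integral-sign identity.  With
`H r = 2λ_p r + 2πλ_l ∫₀^r (1 − e^{−2λ_p √(r²−ρ²)}) dρ` and `L r = e^{−H r}`, for every
`r > 0` the singular integral `∫₀^r e^{−2λ_p √(r²−x²)}/√(r²−x²) dx` converges and
`L′(r) = −2(λ_p + 2πλ_l λ_p r ∫₀^r e^{−2λ_p √(r²−x²)}/√(r²−x²) dx) · L r`. -/
theorem stmt13 (lp ll : ℝ) (hlp : 0 < lp) (hll : 0 < ll)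
    (H L : ℝ → ℝ)
    (hH : ∀ r, H r = 2 * lp * r +
      2 * π * ll * ∫ ρ in (0 : ℝ)..r, (1 - Real.exp (-(2 * lp * Real.sqrt (r ^ 2 - ρ ^ 2)))))
    (hL : ∀ r, L r = Real.exp (-(H r))) :
    ∀ r : ℝ, 0 < r →
      IntervalIntegrable
        (fun x : ℝ => Real.exp (-(2 * lp * Real.sqrt (r ^ 2 - x ^ 2))) / Real.sqrt (r ^ 2 - x ^ 2))
        volume 0 r ∧
      HasDerivAt L
        (-(2 * (lp + 2 * π * ll * lp * r *
          ∫ x in (0 : ℝ)..r,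
            Real.exp (-(2 * lp * Real.sqrt (r ^ 2 - x ^ 2))) / Real.sqrt (r ^ 2 - x ^ 2))) * L r)
        r :=
  stmt13_general lp ll H L hH hL
end
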